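/- In (Γ_log^Q, ψ), the successor function s = ψ ∘ ∫ satisfies: s(0) = e_0 = min Ψ > 0, and for each n, s(e_0 + ⋯ + e_n) = e_0 + ⋯ + e_{n+1}. More generally, if α = (r₀, …) and n is least with r_n ≠ 1, then s(α) = e_0 + ⋯ + e_n. -/

import Mathlib

open Finsupp

/-- The underlying ordered abelian group of `Γ_log^ℚ`: `⊕_{n∈ℕ} ℚ·e_n` with the
lexicographic order (a nonzero element is positive iff its first nonzero coordinate is). -/
abbrev GammaLogQ : Type := Lex (ℕ →₀ ℚ)

/-- The map `ψ` of `Γ_log^ℚ`: for nonzero `α` whose first nonzero coordinate is the `n`-th,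
`ψ(α) = e_0 + e_1 + ⋯ + e_n`. -/
noncomputable def psiLog (α : GammaLogQ) : GammaLogQ :=
  if h : ofLex α = 0 then 0
  else toLex (∑ k ∈ Finset.range
    ((ofLex α).support.min' (Finsupp.support_nonempty_iff.mpr h) + 1), Finsupp.single k 1)

/-- `i` is an integration operator for `ψ`. -/
def IsIntegration (ψ i : GammaLogQ → GammaLogQ) : Prop :=
  ∀ α : GammaLogQ, (i α ≠ 0 ∧ i α + ψ (i α) = α) ∧
    ∀ β : GammaLogQ, β ≠ 0 → β + ψ β = α → β = i α

noncomputable def SQ (n : ℕ) : ℕ →₀ ℚ := ∑ k ∈ Finset.range n, Finsupp.single k 1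

lemma SQ_apply (n m : ℕ) : SQ n m = if m < n then 1 else 0 := by
  classical
  rw [SQ, Finsupp.finset_sum_apply]
  simp [Finsupp.single_apply, Finset.sum_ite_eq' (Finset.range n) m (fun _ => (1:ℚ))]

lemma psiLog_eq {β : ℕ →₀ ℚ} (h : β ≠ 0) (n : ℕ)
    (hmin : β.support.min' (Finsupp.support_nonempty_iff.mpr h) = n) :
    psiLog (toLex β) = toLex (SQ (n+1)) := by
  rw [psiLog, dif_neg (show ofLex (toLex β) ≠ 0 from h)]
  show toLex (∑ k ∈ Finset.range
    (β.support.min' (Finsupp.support_nonempty_iff.mpr h) + 1), Finsupp.single k 1) = _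
  rw [hmin]
  rfl

lemma key (i : GammaLogQ → GammaLogQ) (hi : IsIntegration psiLog i)
    (α : GammaLogQ) (n : ℕ) (hn : ofLex α n ≠ 1) (hm : ∀ m < n, ofLex α m = 1) :
    psiLog (i α) = toLex (SQ (n+1)) := by
  classical
  set β : ℕ →₀ ℚ := ofLex α - SQ (n+1) with hβ
  have hβapp : ∀ m, β m = ofLex α m - SQ (n+1) m := fun m => by simp [hβ]
  have hβn : β n ≠ 0 := by
    rw [hβapp, SQ_apply, if_pos (Nat.lt_succ_self n)]
    exact sub_ne_zero.mpr hn
  have hβ0 : β ≠ 0 := fun h => hβn (by rw [h]; rfl)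
  have hsupp : n ∈ β.support := Finsupp.mem_support_iff.mpr hβn
  have hmin : β.support.min' (Finsupp.support_nonempty_iff.mpr hβ0) = n := by
    refine le_antisymm (Finset.min'_le _ _ hsupp) (Finset.le_min' _ _ _ ?_)
    intro m hmem
    by_contra hlt
    push_neg at hlt
    have : β m = 0 := by
      rw [hβapp, SQ_apply, if_pos (hlt.trans (Nat.lt_succ_self n)), hm m hlt, sub_self]
    exact Finsupp.mem_support_iff.mp hmem this
  have hpsi : psiLog (toLex β) = toLex (SQ (n+1)) := psiLog_eq hβ0 n hmin
  have heq : toLex β = i α := (hi α).2 (toLex β) hβ0 (by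
    rw [hpsi]
    show toLex (β + SQ (n+1)) = α
    rw [hβ, sub_add_cancel]
    rfl)
  rw [← heq, hpsi]


/-- in `(Γ_log^ℚ, ψ)`, the successor function `s = ψ ∘ ∫` satisfies
`s(0) = e_0 = min Ψ > 0`, `s(e_0 + ⋯ + e_n) = e_0 + ⋯ + e_{n+1}`, and more generally if `n`
is least with the `n`-th coordinate of `α` not equal to `1`, then `s(α) = e_0 + ⋯ + e_n`. -/
theorem gammaLogQ_successor (i : GammaLogQ → GammaLogQ) (hi : IsIntegration psiLog i) :
    (psiLog (i 0) = toLex (Finsupp.single 0 1) ∧ 0 < psiLog (i 0) ∧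
      ∀ γ : GammaLogQ, γ ≠ 0 → psiLog (i 0) ≤ psiLog γ) ∧
    (∀ n : ℕ, psiLog (i (toLex (∑ k ∈ Finset.range (n + 1), Finsupp.single k 1))) =
      toLex (∑ k ∈ Finset.range (n + 2), Finsupp.single k 1)) ∧
    (∀ (α : GammaLogQ) (n : ℕ), ofLex α n ≠ 1 → (∀ m < n, ofLex α m = 1) →
      psiLog (i α) = toLex (∑ k ∈ Finset.range (n + 1), Finsupp.single k 1)) := by
  have h0 : psiLog (i 0) = toLex (SQ 1) := by
    refine key i hi 0 0 ?_ ?_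
    · show (0 : ℕ →₀ ℚ) 0 ≠ 1; simp
    · omega
  have hSQ1 : SQ 1 = Finsupp.single 0 1 := by simp [SQ]
  refine ⟨⟨by rw [h0, hSQ1], ?_, ?_⟩, ?_, ?_⟩
  · rw [h0, hSQ1]
    rw [Finsupp.Lex.lt_iff]
    exact ⟨0, fun j hj => absurd hj (Nat.not_lt_zero j), by simp⟩
  · intro γ hγ
    have hne : ofLex γ ≠ 0 := hγ
    set m := (ofLex γ).support.min' (Finsupp.support_nonempty_iff.mpr hne) with hm
    have : psiLog γ = toLex (SQ (m+1)) := psiLog_eq hne m hm.symm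
    rw [h0, this]
    rw [le_iff_eq_or_lt, Finsupp.Lex.lt_iff]
    rcases Nat.eq_zero_or_pos m with hm0 | hm0
    · left; rw [hm0]
    · right
      refine ⟨1, fun j hj => ?_, ?_⟩
      · interval_cases j
        show SQ 1 0 = SQ (m+1) 0
        rw [SQ_apply, SQ_apply]; simp
      · show SQ 1 1 < SQ (m+1) 1
        rw [SQ_apply, SQ_apply, if_neg (by omega), if_pos (by omega)]
        norm_num
  · intro n
    have := key i hi (toLex (SQ (n+1))) (n+1)
      (by show SQ (n+1) (n+1) ≠ 1; rw [SQ_apply]; simp)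
      (fun m hm => by show SQ (n+1) m = 1; rw [SQ_apply, if_pos hm])
    simpa [SQ] using this
  · intro α n hn hm
    simpa [SQ] using key i hi α n hn hm
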